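/- Fix ψ ∈ H^∞ not identically zero. A map T : ψH^∞ → ψH^∞ is an algebra automorphism (bijective, ℂ-linear and multiplicative) if and only if there exist φ ∈ Aut(𝔻) and an invertible element g of H^∞ (g ∈ H^∞ with g·h ≡ 1 on 𝔻 for some h ∈ H^∞) such that ψ ∘ φ = ψ·g and T f = f ∘ φ for all f ∈ ψH^∞. -/

import Mathlib

open Complex Metric Set

local notation "𝔻" => Complex.UnitDisc

/-- The closed unit disc, as a subset of `ℂ`. -/
def cD : Set ℂ := Metric.closedBall 0 1

/-- A function on the open unit disc is analytic (holomorphic):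
it is the restriction of a function differentiable on the open unit ball. -/
def HolOn (f : 𝔻 → ℂ) : Prop :=
  ∃ F : ℂ → ℂ, DifferentiableOn ℂ F (Metric.ball 0 1) ∧ ∀ z : 𝔻, F ↑z = f z

/-- Membership in `H^∞`, the algebra of bounded analytic functions on the unit disc. -/
def MemHinf (f : 𝔻 → ℂ) : Prop :=
  HolOn f ∧ ∃ M : ℝ, ∀ z : 𝔻, ‖f z‖ ≤ M

/-- Membership in the disc algebra `A(𝔻)`: continuous on the closed unit disc,
analytic in its interior. -/
def MemDiscAlg (f : ↥cD → ℂ) : Prop :=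
  ∃ F : ℂ → ℂ, ContinuousOn F cD ∧ DifferentiableOn ℂ F (Metric.ball 0 1) ∧
    ∀ z : ↥cD, F ↑z = f z

/-- `φ ∈ Aut(𝔻)`: a bijective analytic self-map of the unit disc. -/
def IsDiscAut (φ : 𝔻 → 𝔻) : Prop :=
  (∃ F : ℂ → ℂ, DifferentiableOn ℂ F (Metric.ball 0 1) ∧ ∀ z : 𝔻, F ↑z = ↑(φ z)) ∧
  Function.Bijective φ

/-- A Möbius automorphism of the unit disc, given by its global formula
`Φ z = η (a - z) / (1 - conj a * z)` with `|a| < 1`, `|η| = 1`; this is the analytic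
extension to (a neighbourhood of) the closed unit disc of a disc automorphism. -/
def IsMobius (Φ : ℂ → ℂ) : Prop :=
  ∃ a η : ℂ, ‖a‖ < 1 ∧ ‖η‖ = 1 ∧
    ∀ z : ℂ, Φ z = η * (a - z) / (1 - (starRingEnd ℂ) a * z)

/-- `T` is an algebra automorphism of the set `A` of complex-valued functions:
a bijective, `ℂ`-linear and multiplicative self-map of `A`. -/
def IsAlgAutOn {ι : Type} (A : Set (ι → ℂ)) (T : (ι → ℂ) → (ι → ℂ)) : Prop :=
  (∀ f ∈ A, T f ∈ A) ∧
  (∀ f ∈ A, ∀ g ∈ A, T (f + g) = T f + T g) ∧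
  (∀ (c : ℂ), ∀ f ∈ A, T (c • f) = c • T f) ∧
  (∀ f ∈ A, ∀ g ∈ A, T (f * g) = T f * T g) ∧
  Set.InjOn T A ∧ Set.SurjOn T A A

/-- The subalgebra `ψ H^∞ = {ψ · g : g ∈ H^∞}`. -/
def psiH (ψ : 𝔻 → ℂ) : Set (𝔻 → ℂ) :=
  {f | ∃ g, MemHinf g ∧ f = fun z => ψ z * g z}

/-- The subalgebra `ψ A(𝔻) = {ψ · g : g ∈ A(𝔻)}`. -/
def psiA (ψ : ↥cD → ℂ) : Set (↥cD → ℂ) :=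
  {f | ∃ g, MemDiscAlg g ∧ f = fun z => ψ z * g z}

/-- The composition operator `C_φ : f ↦ f ∘ φ` is a well-defined algebra automorphism
of the set `A` (it is automatically linear and multiplicative). -/
def CompAutOn (A : Set (𝔻 → ℂ)) (φ : 𝔻 → 𝔻) : Prop :=
  (∀ f ∈ A, f ∘ φ ∈ A) ∧ Set.InjOn (fun f => f ∘ φ) A ∧ Set.SurjOn (fun f => f ∘ φ) A A

/-- The Möbius factor `τ_a(z) = (a - z)/(1 - conj a · z)`. -/
noncomputable def mobius (a z : ℂ) : ℂ := (a - z) / (1 - (starRingEnd ℂ) a * z)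

/-- `f` has a zero of order (multiplicity) `k` at `w`:
`f z = (z - w)^k g z` with `g` analytic and `g w ≠ 0`. -/
def ZeroOrderAt (f : 𝔻 → ℂ) (w : 𝔻) (k : ℕ) : Prop :=
  ∃ g : 𝔻 → ℂ, HolOn g ∧ g w ≠ 0 ∧ ∀ z : 𝔻, f z = ((z : ℂ) - (w : ℂ)) ^ k * g z

/-- `g` is an invertible element of `H^∞`. -/
def InvHinf (g : 𝔻 → ℂ) : Prop :=
  MemHinf g ∧ ∃ h : 𝔻 → ℂ, MemHinf h ∧ ∀ z, g z * h z = 1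

/-- `g` is an invertible element of the disc algebra `A(𝔻)`. -/
def InvDiscAlg (g : ↥cD → ℂ) : Prop :=
  MemDiscAlg g ∧ ∃ h : ↥cD → ℂ, MemDiscAlg h ∧ ∀ z, g z * h z = 1

/-!
At a point `w` where `T (ψ²)` does not vanish, `a ↦ T (ψ² a) w / T (ψ²) w` is a character of
`H^∞`. A character is bounded by the sup norm (it lands in the spectrum), and a character sending
the coordinate `z` to a point `u ∈ 𝔻` is evaluation at `u` (factor `f = f u + (z - u) q`). Hence
`Φ = T (ψ² z) / T (ψ²)`, which extends holomorphically across the isolated zeros of `T (ψ²)`,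
satisfies `|Φ| ≤ 1`; it cannot touch the circle, or `T` would kill `ψ² (z - c)` for a unimodular
constant `c`. So `Φ` is a holomorphic self-map `φ` of `𝔻` with `T f = f ∘ φ` off a discrete set,
hence everywhere. Doing the same for `T⁻¹` gives `φ'`, and since `ψ²` and `ψ² z` separate the
points where `ψ ≠ 0`, `φ ∘ φ' = φ' ∘ φ = id`. Conversely `f ↦ f ∘ φ` preserves `ψ H^∞` because
`ψ ∘ φ = ψ g`, and it is onto because the inverse of a bijective holomorphic map is holomorphic.
-/

open Filter Topology

section IsolatedZeros

variable {𝕜 E : Type*} [NontriviallyNormedField 𝕜] [NormedAddCommGroup E] [NormedSpace 𝕜 E]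

theorem AnalyticOnNhd.eventually_nhdsNE_ne_zero {f : 𝕜 → E} {U : Set 𝕜} {c : 𝕜}
    (hf : AnalyticOnNhd 𝕜 f U) (hU : IsPreconnected U) (hne : ∃ x ∈ U, f x ≠ 0) (hc : c ∈ U) :
    ∀ᶠ x in 𝓝[≠] c, f x ≠ 0 :=
  (hf c hc).eventually_eq_zero_or_eventually_ne_zero.resolve_left fun h =>
    let ⟨_, hx, hfx⟩ := hne
    hfx (hf.eqOn_zero_of_preconnected_of_eventuallyEq_zero hU hc h hx)

theorem AnalyticOnNhd.eqOn_of_eqOn_ne_zero {F : Type*} [NormedAddCommGroup F] [NormedSpace 𝕜 F]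
    {f g : 𝕜 → E} {q : 𝕜 → F} {U : Set 𝕜} (hf : AnalyticOnNhd 𝕜 f U) (hg : AnalyticOnNhd 𝕜 g U)
    (hq : AnalyticOnNhd 𝕜 q U) (hU : IsOpen U) (hUc : IsPreconnected U)
    (hne : ∃ x ∈ U, q x ≠ 0) (hfg : ∀ x ∈ U, q x ≠ 0 → f x = g x) : EqOn f g U := by
  obtain ⟨c, hc, -⟩ := id hne
  refine hf.eqOn_of_preconnected_of_frequently_eq hg hUc hc ?_
  exact ((hq.eventually_nhdsNE_ne_zero hUc hne hc).and
    (eventually_nhdsWithin_of_eventually_nhds (hU.eventually_mem hc))).frequently.mono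
    fun x hx => hfg x hx.2 hx.1

theorem AnalyticAt.eventually_nhdsNE_deriv_ne_zero [CharZero 𝕜] [CompleteSpace E] {f : 𝕜 → E}
    {x : 𝕜} (hf : AnalyticAt 𝕜 f x) (hnc : ¬ ∀ᶠ z in 𝓝 x, f z = f x) :
    ∀ᶠ z in 𝓝[≠] x, deriv f z ≠ 0 :=
  hf.deriv.eventually_eq_zero_or_eventually_ne_zero.resolve_left fun h => hnc <| by
    have : analyticOrderAt (f · - f x) x = ⊤ := by
      rw [← hf.analyticOrderAt_deriv_add_one, analyticOrderAt_eq_top.2 h, top_add]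
    exact (analyticOrderAt_eq_top.1 this).mono fun z hz => sub_eq_zero.1 hz

end IsolatedZeros

theorem not_eventually_eq_of_injOn {X Y : Type*} [TopologicalSpace X] {a : X} [(𝓝[≠] a).NeBot]
    {f : X → Y} {U : Set X} (hf : InjOn f U) (hU : U ∈ 𝓝 a) : ¬ ∀ᶠ x in 𝓝 a, f x = f a := by
  intro h
  obtain ⟨x, ⟨hfx, hx⟩, hxa⟩ :=
    (((h.and hU).filter_mono nhdsWithin_le_nhds).and
      (self_mem_nhdsWithin : {a}ᶜ ∈ 𝓝[≠] a)).exists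
  exact hxa (hf hx (mem_of_mem_nhds hU) hfx)

theorem DifferentiableOn.exists_eq_mul_of_norm_le {U : Set ℂ} {p q : ℂ → ℂ} (hU : IsOpen U)
    (hUc : IsPreconnected U) (hp : DifferentiableOn ℂ p U) (hq : DifferentiableOn ℂ q U)
    (hne : ∃ x ∈ U, q x ≠ 0) (hle : ∀ x ∈ U, q x ≠ 0 → ‖p x‖ ≤ ‖q x‖) :
    ∃ F : ℂ → ℂ, DifferentiableOn ℂ F U ∧ ∀ x ∈ U, ‖F x‖ ≤ 1 ∧ p x = F x * q x := by
  set G : ℂ → ℂ := fun x => p x / q x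
  set F : ℂ → ℂ := fun x => limUnder (𝓝[≠] x) G
  have hpunct : ∀ c ∈ U, ∀ᶠ x in 𝓝[≠] c, x ∈ U ∧ q x ≠ 0 := fun c hc =>
    (eventually_nhdsWithin_of_eventually_nhds (hU.eventually_mem hc)).and
      ((hq.analyticOnNhd hU).eventually_nhdsNE_ne_zero hUc hne hc)
  have hGdiff : ∀ x ∈ U, q x ≠ 0 → DifferentiableAt ℂ G x := fun x hx hqx =>
    (hp.differentiableAt (hU.mem_nhds hx)).div (hq.differentiableAt (hU.mem_nhds hx)) hqx
  have hGle : ∀ x ∈ U, q x ≠ 0 → ‖G x‖ ≤ 1 := fun x hx hqx => by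
    rw [norm_div]; exact div_le_one_of_le₀ (hle x hx hqx) (norm_nonneg _)
  have hFG : ∀ x ∈ U, q x ≠ 0 → F =ᶠ[𝓝 x] G := fun x hx hqx => by
    filter_upwards [hU.eventually_mem hx,
      (hq.differentiableAt (hU.mem_nhds hx)).continuousAt.eventually_ne hqx] with y hy hqy
    exact (hGdiff y hy hqy).continuousAt.continuousWithinAt.tendsto.limUnder_eq
  -- Riemann's theorem: `G` is bounded near each zero of `q`, which is isolated
  have hlim : ∀ c ∈ U, Tendsto G (𝓝[≠] c) (𝓝 (F c)) := fun c hc =>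
    tendsto_limUnder_of_differentiable_on_punctured_nhds_of_bounded_under
      ((hpunct c hc).mono fun x hx => hGdiff x hx.1 hx.2)
      ⟨1 + ‖G c‖, eventually_map.2 <|
        (hpunct c hc).mono fun x hx => norm_sub_le_of_le (hGle x hx.1 hx.2) le_rfl⟩
  have hFdiff : ∀ c ∈ U, DifferentiableAt ℂ F c := fun c hc => by
    have hs : insert c {x | x ∈ U ∧ q x ≠ 0} ∈ 𝓝 c := insert_mem_nhds_iff.2 (hpunct c hc)
    refine ((differentiableOn_compl_singleton_and_continuousAt_iff hs).1 ⟨?_, ?_⟩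
      ).differentiableAt hs
    · rintro x ⟨hx | hx, hxc⟩
      · exact absurd hx hxc
      · exact ((hGdiff x hx.1 hx.2).congr_of_eventuallyEq (hFG x hx.1 hx.2)).differentiableWithinAt
    · exact continuousWithinAt_compl_self.1 <| (hlim c hc).congr' <|
        (hpunct c hc).mono fun x hx => (hFG x hx.1 hx.2).self_of_nhds.symm
  refine ⟨F, fun c hc => (hFdiff c hc).differentiableWithinAt, fun c hc => ⟨?_, ?_⟩⟩
  · exact le_of_tendsto (hlim c hc).norm ((hpunct c hc).mono fun x hx => hGle x hx.1 hx.2)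
  · have hFq : DifferentiableOn ℂ (F * q) U :=
      DifferentiableOn.mul (fun x hx => (hFdiff x hx).differentiableWithinAt) hq
    refine (hp.analyticOnNhd hU).eqOn_of_eqOn_ne_zero (hFq.analyticOnNhd hU)
      (hq.analyticOnNhd hU) hU hUc hne (fun x hx hqx => ?_) hc
    rw [Pi.mul_apply, (hFG x hx hqx).self_of_nhds]
    exact (div_mul_cancel₀ _ hqx).symm

section InverseFunction

variable {U V : Set ℂ} {F G : ℂ → ℂ}

theorem continuousAt_of_leftInvOn (hU : IsOpen U) (hV : IsOpen V) (hF : DifferentiableOn ℂ F U)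
    (hinj : InjOn F U) (hG : MapsTo G V U) (hFG : LeftInvOn F G V) {c : ℂ} (hc : c ∈ V) :
    ContinuousAt G c := by
  have hGc : U ∈ 𝓝 (G c) := hU.mem_nhds (hG hc)
  have hopen : 𝓝 c ≤ map F (𝓝 (G c)) := by
    simpa [hFG hc] using ((hF.analyticOnNhd hU _ (hG hc)).eventually_constant_or_nhds_le_map_nhds
      ).resolve_left (not_eventually_eq_of_injOn hinj hGc)
  refine fun W hW => mem_map.2 ?_
  filter_upwards [hopen (image_mem_map (inter_mem hW hGc)), hV.mem_nhds hc]
    with x ⟨y, hy, hyx⟩ hx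
  rw [mem_preimage, ← hinj hy.2 (hG hx) (hyx.trans (hFG hx).symm)]
  exact hy.1

theorem differentiableOn_of_leftInvOn (hU : IsOpen U) (hV : IsOpen V)
    (hF : DifferentiableOn ℂ F U) (hinj : InjOn F U) (hG : MapsTo G V U) (hFG : LeftInvOn F G V) :
    DifferentiableOn ℂ G V := by
  have hcont := fun c (hc : c ∈ V) => continuousAt_of_leftInvOn hU hV hF hinj hG hFG hc
  have hreg : ∀ x ∈ V, deriv F (G x) ≠ 0 → DifferentiableAt ℂ G x := fun x hx hd =>
    (HasDerivAt.of_local_left_inverse (hcont x hx)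
      (hF.differentiableAt (hU.mem_nhds (hG hx))).hasDerivAt hd
      ((hV.eventually_mem hx).mono fun y hy => hFG hy)).differentiableAt
  intro c hc
  -- critical points of `F` are isolated, so `G` is differentiable on a punctured neighbourhood
  -- of `c`, and continuous at `c`
  have hGne : Tendsto G (𝓝[≠] c) (𝓝[≠] (G c)) :=
    tendsto_nhdsWithin_of_tendsto_nhds_of_eventually_within _
      ((hcont c hc).mono_left nhdsWithin_le_nhds)
      (eventually_nhdsWithin_of_eventually_nhds (hV.eventually_mem hc) |>.and
        self_mem_nhdsWithin |>.mono fun x hx hGx =>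
          hx.2 (by rw [← hFG hx.1, mem_singleton_iff.1 hGx, hFG hc]; rfl))
  have hcrit : ∀ᶠ x in 𝓝[≠] c, x ∈ V ∧ deriv F (G x) ≠ 0 :=
    (eventually_nhdsWithin_of_eventually_nhds (hV.eventually_mem hc)).and <|
      hGne.eventually <| (hF.analyticOnNhd hU _ (hG hc)).eventually_nhdsNE_deriv_ne_zero
        (not_eventually_eq_of_injOn hinj (hU.mem_nhds (hG hc)))
  have hs : insert c {x | x ∈ V ∧ deriv F (G x) ≠ 0} ∈ 𝓝 c := insert_mem_nhds_iff.2 hcrit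
  refine (((differentiableOn_compl_singleton_and_continuousAt_iff hs).1 ⟨?_, hcont c hc⟩
    ).differentiableAt hs).differentiableWithinAt
  rintro x ⟨hx | hx, hxc⟩
  · exact absurd hx hxc
  · exact (hreg x hx.1 hx.2).differentiableWithinAt

end InverseFunction

section Disc

variable {f g q : 𝔻 → ℂ}

theorem holOn_const (c : ℂ) : HolOn fun _ => c :=
  ⟨fun _ => c, differentiableOn_const c, fun _ => rfl⟩

theorem holOn_coe : HolOn fun z : 𝔻 => (z : ℂ) :=
  ⟨id, differentiableOn_id, fun _ => rfl⟩

theorem HolOn.add (hf : HolOn f) (hg : HolOn g) : HolOn (f + g) := by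
  obtain ⟨F, hF, hFf⟩ := hf
  obtain ⟨G, hG, hGg⟩ := hg
  exact ⟨F + G, hF.add hG, fun z => by simp [hFf, hGg]⟩

theorem HolOn.mul (hf : HolOn f) (hg : HolOn g) : HolOn (f * g) := by
  obtain ⟨F, hF, hFf⟩ := hf
  obtain ⟨G, hG, hGg⟩ := hg
  exact ⟨F * G, hF.mul hG, fun z => by simp [hFf, hGg]⟩

theorem HolOn.inv (hf : HolOn f) (h0 : ∀ z, f z ≠ 0) : HolOn f⁻¹ := by
  obtain ⟨F, hF, hFf⟩ := hf
  refine ⟨F⁻¹, hF.inv fun x hx => ?_, fun z => by simp [hFf]⟩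
  lift x to 𝔻 using mem_ball_zero_iff.1 hx
  rw [hFf]
  exact h0 x

theorem HolOn.comp {φ : 𝔻 → 𝔻} (hf : HolOn f) (hφ : HolOn fun z => (φ z : ℂ)) :
    HolOn (f ∘ φ) := by
  obtain ⟨F, hF, hFf⟩ := hf
  obtain ⟨Φ, hΦ, hΦφ⟩ := hφ
  refine ⟨F ∘ Φ, hF.comp hΦ fun x hx => ?_, fun z => by simp [hΦφ, hFf]⟩
  lift x to 𝔻 using mem_ball_zero_iff.1 hx
  rw [hΦφ]
  exact (φ x).2

theorem HolOn.eq_of_eq_of_ne_zero (hf : HolOn f) (hg : HolOn g) (hq : HolOn q)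
    (hne : ∃ z, q z ≠ 0) (hfg : ∀ z, q z ≠ 0 → f z = g z) : f = g := by
  obtain ⟨F, hF, hFf⟩ := hf
  obtain ⟨G, hG, hGg⟩ := hg
  obtain ⟨Q, hQ, hQq⟩ := hq
  have hFG := (hF.analyticOnNhd isOpen_ball).eqOn_of_eqOn_ne_zero (hG.analyticOnNhd isOpen_ball)
    (hQ.analyticOnNhd isOpen_ball) isOpen_ball (convex_ball 0 1).isPreconnected
    (let ⟨z, hz⟩ := hne; ⟨z, z.2, by rwa [hQq]⟩) fun x hx hQx => by
      lift x to 𝔻 using mem_ball_zero_iff.1 hx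
      rw [hFf, hGg]
      exact hfg x (by rwa [← hQq])
  funext z
  rw [← hFf, ← hGg]
  exact hFG z.2

theorem HolOn.inverse {φ σ : 𝔻 → 𝔻} (hφ : HolOn fun z => (φ z : ℂ))
    (hinj : Function.Injective φ) (hσ : Function.RightInverse σ φ) :
    HolOn fun z => (σ z : ℂ) := by
  classical
  obtain ⟨Φ, hΦ, hΦφ⟩ := hφ
  let G : ℂ → ℂ := fun x => if hx : ‖x‖ < 1 then σ (.mk x hx) else 0
  have hG : ∀ z : 𝔻, G z = σ z := fun z => by simp [G, z.norm_lt_one]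
  refine ⟨G, differentiableOn_of_leftInvOn isOpen_ball isOpen_ball hΦ ?_ ?_ ?_, hG⟩
  · intro x hx y hy hxy
    lift x to 𝔻 using mem_ball_zero_iff.1 hx
    lift y to 𝔻 using mem_ball_zero_iff.1 hy
    rw [hΦφ, hΦφ] at hxy
    exact congrArg _ (hinj (UnitDisc.coe_injective hxy))
  · intro x hx
    lift x to 𝔻 using mem_ball_zero_iff.1 hx
    rw [hG]
    exact (σ x).2
  · intro x hx
    lift x to 𝔻 using mem_ball_zero_iff.1 hx
    rw [hG, hΦφ]
    exact congrArg _ (hσ x)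

theorem HolOn.exists_eq_mul_of_norm_le (hf : HolOn f) (hq : HolOn q) (hne : ∃ z, q z ≠ 0)
    (hle : ∀ z, q z ≠ 0 → ‖f z‖ ≤ ‖q z‖) :
    ∃ Φ, HolOn Φ ∧ ∀ z, ‖Φ z‖ ≤ 1 ∧ f z = Φ z * q z := by
  obtain ⟨F, hF, hFf⟩ := hf
  obtain ⟨Q, hQ, hQq⟩ := hq
  obtain ⟨Φ, hΦ, hΦFQ⟩ := hF.exists_eq_mul_of_norm_le isOpen_ball
    (convex_ball 0 1).isPreconnected hQ (let ⟨z, hz⟩ := hne; ⟨z, z.2, by rwa [hQq]⟩)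
    fun x hx hQx => by
      lift x to 𝔻 using mem_ball_zero_iff.1 hx
      rw [hQq] at hQx
      rw [hFf, hQq]
      exact hle x hQx
  refine ⟨fun z => Φ z, ⟨Φ, hΦ, fun _ => rfl⟩, fun z => ?_⟩
  rw [← hFf, ← hQq]
  exact hΦFQ z z.2

theorem HolOn.eq_of_forall_norm_le (hf : HolOn f) {z₀ : 𝔻} (hle : ∀ z, ‖f z‖ ≤ ‖f z₀‖) (z : 𝔻) :
    f z = f z₀ := by
  obtain ⟨F, hF, hFf⟩ := hf
  have hmax : IsMaxOn (norm ∘ F) (ball 0 1) z₀ := fun x hx => by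
    lift x to 𝔻 using mem_ball_zero_iff.1 hx
    simp only [mem_ofPred_eq, Function.comp_apply, hFf]
    exact hle x
  rw [← hFf, ← hFf]
  exact Complex.eqOn_of_isPreconnected_of_isMaxOn_norm (convex_ball 0 1).isPreconnected
    isOpen_ball hF z₀.2 hmax z.2

end Disc

section BoundedHolomorphic

variable {f : 𝔻 → ℂ}

def hinf : Subalgebra ℂ (𝔻 → ℂ) where
  carrier := {f | MemHinf f}
  mul_mem' := fun {f g} ⟨hf, M, hM⟩ ⟨hg, N, hN⟩ => ⟨hf.mul hg, M * N, fun z => by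
    rw [Pi.mul_apply, norm_mul]
    exact mul_le_mul (hM z) (hN z) (norm_nonneg _) ((norm_nonneg _).trans (hM z))⟩
  add_mem' := fun {f g} ⟨hf, M, hM⟩ ⟨hg, N, hN⟩ =>
    ⟨hf.add hg, M + N, fun z => norm_add_le_of_le (hM z) (hN z)⟩
  algebraMap_mem' c := ⟨holOn_const c, ‖c‖, fun _ => le_rfl⟩


theorem MemHinf.inv (hf : MemHinf f) {δ : ℝ} (hδ : 0 < δ) (hfδ : ∀ z, δ ≤ ‖f z‖) :
    MemHinf f⁻¹ :=
  ⟨hf.1.inv fun z => norm_pos_iff.1 (hδ.trans_le (hfδ z)), δ⁻¹, fun z => by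
    rw [Pi.inv_apply, norm_inv]
    exact inv_anti₀ hδ (hfδ z)⟩

theorem MemHinf.comp {φ : 𝔻 → 𝔻} (hf : MemHinf f) (hφ : HolOn fun z => (φ z : ℂ)) :
    MemHinf (f ∘ φ) :=
  ⟨hf.1.comp hφ, let ⟨M, hM⟩ := hf.2; ⟨M, fun z => hM (φ z)⟩⟩

/-- The difference quotient at `u` of a bounded holomorphic function is again bounded: near `u`
by continuity, away from `u` because the denominator is bounded below. -/
theorem MemHinf.exists_eq_add_mul (hf : MemHinf f) (u : 𝔻) :
    ∃ q, MemHinf q ∧ ∀ z : 𝔻, f z = f u + (z - u) * q z := by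
  obtain ⟨⟨F, hF, hFf⟩, M, hM⟩ := hf
  set r := (1 - ‖(u : ℂ)‖) / 2
  have hr : 0 < r := by have := u.norm_lt_one; simp only [r]; linarith
  have hsub : closedBall (u : ℂ) r ⊆ ball 0 1 := fun x hx => by
    rw [mem_closedBall, dist_eq_norm] at hx
    rw [mem_ball_zero_iff]
    calc ‖x‖ ≤ ‖x - u‖ + ‖(u : ℂ)‖ := norm_le_norm_sub_add _ _
      _ < 1 := by have := u.norm_lt_one; simp only [r] at hx; linarith
  have hq : DifferentiableOn ℂ (dslope F u) (ball 0 1) :=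
    (differentiableOn_dslope (isOpen_ball.mem_nhds (mem_ball_zero_iff.2 u.norm_lt_one))).2 hF
  obtain ⟨C, hC⟩ := (isCompact_closedBall (u : ℂ) r).exists_bound_of_continuousOn
    (hq.continuousOn.mono hsub)
  refine ⟨fun z => dslope F u z, ⟨⟨_, hq, fun _ => rfl⟩, max C (2 * M / r), fun z => ?_⟩,
    fun z => ?_⟩
  · by_cases hz : (z : ℂ) ∈ closedBall (u : ℂ) r
    · exact (hC _ hz).trans (le_max_left _ _)
    rw [mem_closedBall, dist_eq_norm, not_le] at hz
    have hzu : (z : ℂ) ≠ u := fun h => by simp [h] at hz; linarith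
    refine le_max_of_le_right ?_
    change ‖dslope F u z‖ ≤ _
    rw [dslope_of_ne _ hzu, slope_def_field, norm_div, hFf, hFf]
    exact div_le_div₀ (by linarith [(norm_nonneg _).trans (hM u)])
      ((norm_sub_le _ _).trans (by linarith [hM z, hM u])) hr hz.le
  · have := sub_smul_dslope F u z
    rw [hFf, hFf, smul_eq_mul] at this
    linear_combination -this

namespace hinf

def coord : hinf := ⟨fun z => z, holOn_coe, 1, fun z => z.norm_lt_one.le⟩

variable (χ : hinf →ₐ[ℂ] ℂ)

/-- If `|c|` exceeds the bound of `f`, then `c - f` is invertible in `H^∞`, so `c` is not in the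
spectrum of `f`. -/
theorem norm_apply_le_of_forall_norm_le {f : hinf} {M : ℝ}
    (hM : ∀ z, ‖(f : 𝔻 → ℂ) z‖ ≤ M) : ‖χ f‖ ≤ M := by
  by_contra! hlt
  have hδ : ∀ z, ‖χ f‖ - M ≤ ‖(algebraMap ℂ hinf (χ f) - f : 𝔻 → ℂ) z‖ := fun z =>
    (sub_le_sub_left (hM z) _).trans (norm_sub_norm_le (χ f) ((f : 𝔻 → ℂ) z))
  have hunit := (algebraMap ℂ hinf (χ f) - f).2.inv (by linarith) hδ
  refine spectrum.mem_iff.1 (AlgHom.apply_mem_spectrum χ f)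
    (IsUnit.of_mul_eq_one ⟨_, hunit⟩ (Subtype.ext (funext fun z => mul_inv_cancel₀ ?_)))
  exact norm_pos_iff.1 ((sub_pos.2 hlt).trans_le (hδ z))

theorem apply_eq_eval {u : 𝔻} (hu : χ coord = u) (f : hinf) : χ f = (f : 𝔻 → ℂ) u := by
  obtain ⟨q, hq, hfq⟩ := MemHinf.exists_eq_add_mul f.2 u
  have hf : f = algebraMap ℂ hinf ((f : 𝔻 → ℂ) u) + (coord - algebraMap ℂ hinf u) * ⟨q, hq⟩ :=
    Subtype.ext (funext fun z => by simp [hfq z, coord])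
  rw [hf, map_add, map_mul, map_sub, AlgHom.commutes, AlgHom.commutes, hu]
  simp [coord]

end hinf

end BoundedHolomorphic

section AlgebraAutomorphisms

variable {ι : Type} {A : Set (ι → ℂ)} {T : (ι → ℂ) → (ι → ℂ)}

theorem IsAlgAutOn.map_zero (hT : IsAlgAutOn A T) (h0 : (0 : ι → ℂ) ∈ A) : T 0 = 0 := by
  have := hT.2.1 0 h0 0 h0
  rw [add_zero] at this
  exact left_eq_add.1 this

theorem IsAlgAutOn.map_ne_zero (hT : IsAlgAutOn A T) (h0 : (0 : ι → ℂ) ∈ A) {f : ι → ℂ}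
    (hf : f ∈ A) (hf0 : f ≠ 0) : T f ≠ 0 := fun h =>
  hf0 (hT.2.2.2.2.1 hf h0 (h.trans (hT.map_zero h0).symm))

theorem IsAlgAutOn.invFunOn (hadd : ∀ f ∈ A, ∀ g ∈ A, f + g ∈ A)
    (hsmul : ∀ (c : ℂ), ∀ f ∈ A, c • f ∈ A) (hmul : ∀ f ∈ A, ∀ g ∈ A, f * g ∈ A)
    (hT : IsAlgAutOn A T) : IsAlgAutOn A (Function.invFunOn T A) := by
  obtain ⟨hTA, hTadd, hTsmul, hTmul, hinj, hsurj⟩ := hT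
  have hS : MapsTo (Function.invFunOn T A) A A := hsurj.mapsTo_invFunOn
  have hinv : InvOn (Function.invFunOn T A) T A A := BijOn.invOn_invFunOn ⟨hTA, hinj, hsurj⟩
  have hbij : BijOn (Function.invFunOn T A) A A := hinv.symm.bijOn hS hTA
  refine ⟨hS, fun f hf g hg => ?_, fun c f hf => ?_, fun f hf g hg => ?_, hbij.injOn, hbij.surjOn⟩
  · refine hinj (hS (hadd f hf g hg)) (hadd _ (hS hf) _ (hS hg)) ?_
    rw [hinv.2 (hadd f hf g hg), hTadd _ (hS hf) _ (hS hg), hinv.2 hf, hinv.2 hg]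
  · refine hinj (hS (hsmul c f hf)) (hsmul c _ (hS hf)) ?_
    rw [hinv.2 (hsmul c f hf), hTsmul c _ (hS hf), hinv.2 hf]
  · refine hinj (hS (hmul f hf g hg)) (hmul _ (hS hf) _ (hS hg)) ?_
    rw [hinv.2 (hmul f hf g hg), hTmul _ (hS hf) _ (hS hg), hinv.2 hf, hinv.2 hg]

end AlgebraAutomorphisms

section PsiH

variable {ψ f g : 𝔻 → ℂ}

theorem mul_mem_psiH (hg : MemHinf g) : ψ * g ∈ psiH ψ := ⟨g, hg, rfl⟩

theorem zero_mem_psiH : (0 : 𝔻 → ℂ) ∈ psiH ψ := by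
  simpa using mul_mem_psiH (ψ := ψ) (zero_mem hinf)

theorem self_mem_psiH : ψ ∈ psiH ψ := by
  simpa using mul_mem_psiH (ψ := ψ) (one_mem hinf)

theorem MemHinf.of_mem_psiH (hψ : MemHinf ψ) (hf : f ∈ psiH ψ) : MemHinf f := by
  obtain ⟨g, hg, rfl⟩ := hf
  exact mul_mem (s := hinf) hψ hg

theorem psiH_add_mem (hf : f ∈ psiH ψ) (hg : g ∈ psiH ψ) : f + g ∈ psiH ψ := by
  obtain ⟨a, ha, rfl⟩ := hf
  obtain ⟨b, hb, rfl⟩ := hg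
  exact ⟨a + b, add_mem (s := hinf) ha hb, by funext; simp [mul_add]⟩

theorem psiH_smul_mem (c : ℂ) (hf : f ∈ psiH ψ) : c • f ∈ psiH ψ := by
  obtain ⟨a, ha, rfl⟩ := hf
  exact ⟨c • a, Subalgebra.smul_mem hinf ha c, by funext; simp [mul_left_comm]⟩

theorem psiH_mul_mem (hψ : MemHinf ψ) (hf : f ∈ psiH ψ) (hg : g ∈ psiH ψ) : f * g ∈ psiH ψ := by
  obtain ⟨a, ha, rfl⟩ := hf
  exact ⟨a * g, mul_mem (s := hinf) ha (hψ.of_mem_psiH hg), by funext; simp [mul_assoc]⟩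

theorem comp_mem_psiH {φ : 𝔻 → 𝔻} (hφ : HolOn fun z => (φ z : ℂ)) (hg : MemHinf g)
    (hψφ : ∀ z, ψ (φ z) = ψ z * g z) (hf : f ∈ psiH ψ) : f ∘ φ ∈ psiH ψ := by
  obtain ⟨a, ha, rfl⟩ := hf
  exact ⟨g * (a ∘ φ), mul_mem (s := hinf) hg (ha.comp hφ), by funext; simp [hψφ, mul_assoc]⟩

end PsiH

section Automorphisms

variable {ψ : 𝔻 → ℂ} {T : (𝔻 → ℂ) → (𝔻 → ℂ)}

theorem IsAlgAutOn.exists_algHom (hψ : MemHinf ψ) (hT : IsAlgAutOn (psiH ψ) T) {w : 𝔻}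
    (hw : T (ψ * ψ) w ≠ 0) :
    ∃ χ : hinf →ₐ[ℂ] ℂ, ∀ a : hinf, χ a * T (ψ * ψ) w = T (ψ * (ψ * a)) w := by
  obtain ⟨-, hadd, hsmul, hmul, -⟩ := hT
  have hP : ∀ a : hinf, ψ * (ψ * (a : 𝔻 → ℂ)) ∈ psiH ψ := fun a =>
    mul_mem_psiH (mul_mem (s := hinf) hψ a.2)
  let χ : hinf → ℂ := fun a => T (ψ * (ψ * a)) w / T (ψ * ψ) w
  have hχmul : ∀ a b, χ (a * b) = χ a * χ b := fun a b => by
    have h := congrFun (hmul _ (hP (a * b)) _ (mul_mem_psiH hψ)) w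
    rw [show ψ * (ψ * ((a * b : hinf) : 𝔻 → ℂ)) * (ψ * ψ) =
      ψ * (ψ * (a : 𝔻 → ℂ)) * (ψ * (ψ * (b : 𝔻 → ℂ))) by simp only [Subalgebra.coe_mul]; ring,
      hmul _ (hP a) _ (hP b)] at h
    simp only [χ]
    rw [div_mul_div_comm, ← Pi.mul_apply _ _ w, h, Pi.mul_apply, mul_div_mul_right _ _ hw]
  let L : hinf →ₗ[ℂ] ℂ :=
    { toFun := χ
      map_add' a b := by
        simp only [χ, Subalgebra.coe_add, mul_add, hadd _ (hP a) _ (hP b), Pi.add_apply, add_div]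
      map_smul' c a := by
        simp only [χ, Subalgebra.coe_smul, mul_smul_comm, hsmul c _ (hP a), Pi.smul_apply,
          smul_eq_mul, RingHom.id_apply, mul_div_assoc] }
  refine ⟨AlgHom.ofLinearMap L ?_ hχmul, fun a => div_mul_cancel₀ _ hw⟩
  change T (ψ * (ψ * 1)) w / _ = 1
  rw [mul_one, div_self hw]

theorem IsAlgAutOn.exists_apply_ne_zero (hψ : MemHinf ψ) (hne : ∃ z, ψ z ≠ 0)
    (hT : IsAlgAutOn (psiH ψ) T) : ∃ w, T (ψ * ψ) w ≠ 0 := by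
  refine Function.ne_iff.1 (hT.map_ne_zero zero_mem_psiH (mul_mem_psiH hψ) fun h => ?_)
  obtain ⟨z, hz⟩ := hne
  exact mul_ne_zero hz hz (congrFun h z)

theorem IsAlgAutOn.exists_holOn_eq_mul (hψ : MemHinf ψ) (hne : ∃ z, ψ z ≠ 0)
    (hT : IsAlgAutOn (psiH ψ) T) :
    ∃ Φ, HolOn Φ ∧ ∀ z, ‖Φ z‖ ≤ 1 ∧ T (ψ * (ψ * hinf.coord)) z = Φ z * T (ψ * ψ) z := by
  refine HolOn.exists_eq_mul_of_norm_le
    (hψ.of_mem_psiH (hT.1 _ (mul_mem_psiH (mul_mem (s := hinf) hψ hinf.coord.2)))).1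
    (hψ.of_mem_psiH (hT.1 _ (mul_mem_psiH hψ))).1 (hT.exists_apply_ne_zero hψ hne) fun w hw => ?_
  obtain ⟨χ, hχ⟩ := hT.exists_algHom hψ hw
  rw [← hχ, norm_mul]
  exact mul_le_of_le_one_left (norm_nonneg _)
    (hinf.norm_apply_le_of_forall_norm_le χ fun z => z.norm_lt_one.le)

theorem IsAlgAutOn.norm_lt_one (hψ : MemHinf ψ) (hne : ∃ z, ψ z ≠ 0)
    (hT : IsAlgAutOn (psiH ψ) T) {Φ : 𝔻 → ℂ} (hΦ : HolOn Φ)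
    (hTΦ : ∀ z, ‖Φ z‖ ≤ 1 ∧ T (ψ * (ψ * hinf.coord)) z = Φ z * T (ψ * ψ) z) (z₀ : 𝔻) :
    ‖Φ z₀‖ < 1 := by
  by_contra! h1
  have hc : ∀ z, Φ z = Φ z₀ := hΦ.eq_of_forall_norm_le fun z => (hTΦ z).1.trans h1
  have hψ2 : ψ * ψ ∈ psiH ψ := mul_mem_psiH hψ
  have hψ2z : ψ * (ψ * hinf.coord) ∈ psiH ψ :=
    mul_mem_psiH (mul_mem (s := hinf) hψ hinf.coord.2)
  have hkill : T (ψ * (ψ * hinf.coord) + (-Φ z₀) • (ψ * ψ)) = 0 := by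
    rw [hT.2.1 _ hψ2z _ (psiH_smul_mem _ hψ2), hT.2.2.1 _ _ hψ2]
    funext z
    simp [(hTΦ z).2, hc z]
  refine hT.map_ne_zero zero_mem_psiH (psiH_add_mem hψ2z (psiH_smul_mem _ hψ2)) (fun h => ?_)
    hkill
  obtain ⟨z, hz⟩ := hne
  have hzc : (z : ℂ) - Φ z₀ ≠ 0 := sub_ne_zero.2 fun h => z.norm_lt_one.not_ge (h ▸ h1)
  have hz0 := congrFun h z
  simp only [hinf.coord, Pi.add_apply, Pi.mul_apply, Pi.smul_apply, smul_eq_mul,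
    Pi.zero_apply] at hz0
  exact mul_ne_zero (mul_ne_zero hz hz) hzc (by linear_combination hz0)

theorem IsAlgAutOn.exists_eq_comp (hψ : MemHinf ψ) (hne : ∃ z, ψ z ≠ 0)
    (hT : IsAlgAutOn (psiH ψ) T) :
    ∃ φ : 𝔻 → 𝔻, HolOn (fun z => (φ z : ℂ)) ∧ ∀ f ∈ psiH ψ, T f = f ∘ φ := by
  obtain ⟨Φ, hΦ, hTΦ⟩ := hT.exists_holOn_eq_mul hψ hne
  let φ z := UnitDisc.mk (Φ z) (hT.norm_lt_one hψ hne hΦ hTΦ z)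
  refine ⟨φ, hΦ, fun f hf => ?_⟩
  have hfH := hψ.of_mem_psiH hf
  refine HolOn.eq_of_eq_of_ne_zero (hψ.of_mem_psiH (hT.1 f hf)).1 (hfH.1.comp hΦ)
    (hψ.of_mem_psiH (hT.1 _ (mul_mem_psiH hψ))).1 (hT.exists_apply_ne_zero hψ hne) fun w hw => ?_
  obtain ⟨χ, hχ⟩ := hT.exists_algHom hψ hw
  have hχf : χ ⟨f, hfH⟩ = T f w := by
    refine mul_right_cancel₀ hw ((hχ _).trans ?_)
    rw [← Pi.mul_apply _ _ w, ← hT.2.2.2.1 _ hf _ (mul_mem_psiH hψ)]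
    congr 1
    ring
  rw [← hχf]
  exact hinf.apply_eq_eval χ (u := φ w)
    (mul_right_cancel₀ hw ((hχ hinf.coord).trans (hTΦ w).2)) _

theorem eq_id_of_comp_eq_self (hψ : MemHinf ψ) (hne : ∃ z, ψ z ≠ 0) {σ : 𝔻 → 𝔻}
    (hσ : HolOn fun z => (σ z : ℂ)) (h : ∀ f ∈ psiH ψ, f ∘ σ = f) : σ = id := by
  have h1 := congrFun (h _ (mul_mem_psiH hψ))
  have h2 := congrFun (h _ (mul_mem_psiH (mul_mem (s := hinf) hψ hinf.coord.2)))
  simp only [Function.comp_apply, Pi.mul_apply, hinf.coord] at h1 h2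
  funext w
  refine UnitDisc.coe_injective (congrFun (hσ.eq_of_eq_of_ne_zero holOn_coe hψ.1 hne
    fun w hw => mul_left_cancel₀ (mul_ne_zero hw hw) ?_) w)
  linear_combination h2 w - (σ w : ℂ) * h1 w

theorem invHinf_of_comp_eq_mul (hψ : HolOn ψ) (hne : ∃ z, ψ z ≠ 0) {φ φ' : 𝔻 → 𝔻}
    (hφ : HolOn fun z => (φ z : ℂ)) (hφφ' : Function.LeftInverse φ' φ) {g h : 𝔻 → ℂ}
    (hg : MemHinf g) (hh : MemHinf h) (hψφ : ∀ z, ψ (φ z) = ψ z * g z)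
    (hψφ' : ∀ z, ψ (φ' z) = ψ z * h z) : InvHinf g := by
  refine ⟨hg, h ∘ φ, hh.comp hφ, congrFun (HolOn.eq_of_eq_of_ne_zero (hg.1.mul (hh.1.comp hφ))
    (holOn_const 1) hψ hne fun z hz => mul_left_cancel₀ hz ?_)⟩
  have := hψφ' (φ z)
  rw [hφφ' z, hψφ z] at this
  simp only [Function.comp_apply]
  linear_combination -this

theorem IsAlgAutOn.exists_isDiscAut (hψ : MemHinf ψ) (hne : ∃ z, ψ z ≠ 0)
    (hT : IsAlgAutOn (psiH ψ) T) :
    ∃ φ : 𝔻 → 𝔻, IsDiscAut φ ∧ (∃ g : 𝔻 → ℂ, InvHinf g ∧ ∀ z, ψ (φ z) = ψ z * g z) ∧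
      ∀ f ∈ psiH ψ, T f = f ∘ φ := by
  obtain ⟨φ, hφ, hTφ⟩ := hT.exists_eq_comp hψ hne
  obtain ⟨φ', hφ', hTφ'⟩ := (hT.invFunOn (fun _ hf _ hg => psiH_add_mem hf hg)
    (fun c _ hf => psiH_smul_mem c hf) (fun _ hf _ hg => psiH_mul_mem hψ hf hg)).exists_eq_comp
      hψ hne
  have hS : MapsTo (Function.invFunOn T (psiH ψ)) (psiH ψ) (psiH ψ) := hT.2.2.2.2.2.mapsTo_invFunOn
  have hinv : InvOn (Function.invFunOn T (psiH ψ)) T (psiH ψ) (psiH ψ) :=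
    BijOn.invOn_invFunOn ⟨hT.1, hT.2.2.2.2⟩
  have hφφ' : φ' ∘ φ = id := eq_id_of_comp_eq_self hψ hne (hφ'.comp hφ) fun f hf => by
    rw [← Function.comp_assoc, ← hTφ' f hf, ← hTφ _ (hS hf), hinv.2 hf]
  have hφ'φ : φ ∘ φ' = id := eq_id_of_comp_eq_self hψ hne (hφ.comp hφ') fun f hf => by
    rw [← Function.comp_assoc, ← hTφ f hf, ← hTφ' _ (hT.1 f hf), hinv.1 hf]
  obtain ⟨g, hg, hTψ⟩ := hT.1 ψ self_mem_psiH
  obtain ⟨h, hh, hTψ'⟩ := hS (self_mem_psiH (ψ := ψ))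
  have hψφ : ∀ z, ψ (φ z) = ψ z * g z := congrFun ((hTφ ψ self_mem_psiH).symm.trans hTψ)
  have hψφ' : ∀ z, ψ (φ' z) = ψ z * h z := congrFun ((hTφ' ψ self_mem_psiH).symm.trans hTψ')
  refine ⟨φ, ⟨hφ, Function.bijective_iff_has_inverse.2 ⟨φ', congrFun hφφ', congrFun hφ'φ⟩⟩,
    ⟨g, invHinf_of_comp_eq_mul hψ.1 hne hφ (congrFun hφφ') hg hh hψφ hψφ', hψφ⟩, hTφ⟩

theorem isAlgAutOn_of_eq_comp (hψ : MemHinf ψ) {φ : 𝔻 → 𝔻} (hφ : IsDiscAut φ) {g : 𝔻 → ℂ}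
    (hg : InvHinf g) (hψφ : ∀ z, ψ (φ z) = ψ z * g z) (hTφ : ∀ f ∈ psiH ψ, T f = f ∘ φ) :
    IsAlgAutOn (psiH ψ) T := by
  obtain ⟨hφhol, hφbij⟩ := hφ
  obtain ⟨hgH, h, hh, hgh⟩ := hg
  let σ := Function.surjInv hφbij.2
  have hσφ : Function.LeftInverse σ φ := Function.leftInverse_surjInv hφbij
  have hφσ : Function.RightInverse σ φ := Function.rightInverse_surjInv hφbij.2
  have hσhol : HolOn fun z => (σ z : ℂ) := HolOn.inverse hφhol hφbij.1 hφσ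
  have hψσ : ∀ z, ψ (σ z) = ψ z * (h ∘ σ) z := fun z => by
    have := hψφ (σ z)
    rw [hφσ z] at this
    rw [Function.comp_apply, this, mul_assoc, hgh, mul_one]
  refine ⟨fun f hf => hTφ f hf ▸ comp_mem_psiH hφhol hgH hψφ hf, fun f hf f' hf' => ?_,
    fun c f hf => ?_, fun f hf f' hf' => ?_, fun f hf f' hf' hff' => ?_, fun f hf => ?_⟩
  · rw [hTφ _ (psiH_add_mem hf hf'), hTφ f hf, hTφ f' hf']
    rfl
  · rw [hTφ _ (psiH_smul_mem c hf), hTφ f hf]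
    rfl
  · rw [hTφ _ (psiH_mul_mem hψ hf hf'), hTφ f hf, hTφ f' hf']
    rfl
  · rw [hTφ f hf, hTφ f' hf'] at hff'
    exact hφbij.2.injective_comp_right hff'
  · have hfσ := comp_mem_psiH hσhol (hh.comp hσhol) hψσ hf
    refine ⟨f ∘ σ, hfσ, ?_⟩
    rw [hTφ _ hfσ, Function.comp_assoc, hσφ.comp_eq_id, Function.comp_id]

end Automorphisms

/-- for `ψ ∈ H^∞` not identically zero, `T` is an algebra automorphism of
`ψ H^∞` iff `T = C_φ` for some `φ ∈ Aut(𝔻)` with `ψ ∘ φ = ψ · g`, `g` invertible in `H^∞`. -/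
theorem stmt_10 (ψ : 𝔻 → ℂ) (hψ : MemHinf ψ) (hne : ∃ z, ψ z ≠ 0)
    (T : (𝔻 → ℂ) → (𝔻 → ℂ)) :
    IsAlgAutOn (psiH ψ) T ↔
      ∃ φ : 𝔻 → 𝔻, IsDiscAut φ ∧
        (∃ g : 𝔻 → ℂ, InvHinf g ∧ ∀ z, ψ (φ z) = ψ z * g z) ∧
        ∀ f ∈ psiH ψ, T f = f ∘ φ :=
  ⟨fun hT => hT.exists_isDiscAut hψ hne,
    fun ⟨_, hφ, ⟨_, hg, hψφ⟩, hTφ⟩ => isAlgAutOn_of_eq_comp hψ hφ hg hψφ hTφ⟩
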